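/- Let 1 ≤ p < ∞ and n ∈ ℕ. The embedding constant C(p,q,n) := [ q/(q-p) + 2^{nq/p} + 2^{nq} Γ(q+1) e^{a+q+1} ]^{1/q}, with a = 1/(2^{n/p'} · e) where 1/p + 1/p' = 1, satisfies C(p,q,n) = O(q) as q → ∞; that is, there exist a constant C_n > 0 depending only on the dimension n and a threshold q_0 > p such that C(p,q,n) ≤ C_n · q for all q ≥ q_0. -/
import Mathlib


open MeasureTheory ENNReal

noncomputable section

/-- The axis-parallel cube in `ℝⁿ` with corner `a` and side length `r`. -/
def cube (n : ℕ) (a : Fin n → ℝ) (r : ℝ) : Set (Fin n → ℝ) :=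
  Set.univ.pi fun i => Set.Icc (a i) (a i + r)

/-- The weak `L^p` quasi-norm. -/
def wlpNorm {α : Type*} [MeasurableSpace α] (μ : Measure α) (p : ℝ) (f : α → ℝ) : ℝ≥0∞ :=
  ⨆ (t : ℝ) (_ : 0 < t), ENNReal.ofReal t * μ {x | t < |f x|} ^ (1 / p)

/-- The BMO seminorm, via averages over axis-parallel cubes. -/
def bmoNorm {n : ℕ} (f : (Fin n → ℝ) → ℝ) : ℝ≥0∞ :=
  ⨆ (a : Fin n → ℝ) (r : ℝ) (_ : 0 < r),
    ENNReal.ofReal (⨍ x in cube n a r, |f x - ⨍ y in cube n a r, f y|)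

/-- The Morrey norm. -/
def morreyNorm {n : ℕ} (p κ : ℝ) (f : (Fin n → ℝ) → ℝ) : ℝ≥0∞ :=
  ⨆ (a : Fin n → ℝ) (r : ℝ) (_ : 0 < r),
    ((volume (cube n a r) ^ κ)⁻¹ *
      ∫⁻ x in cube n a r, ENNReal.ofReal (|f x| ^ p)) ^ (1 / p)

/-- The weak Morrey norm. -/
def wMorreyNorm {n : ℕ} (p κ : ℝ) (f : (Fin n → ℝ) → ℝ) : ℝ≥0∞ :=
  ⨆ (a : Fin n → ℝ) (r : ℝ) (_ : 0 < r) (t : ℝ) (_ : 0 < t),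
    (volume (cube n a r) ^ (κ / p))⁻¹ * ENNReal.ofReal t *
      (volume {y ∈ cube n a r | t < |f y|}) ^ (1 / p)


/-- The embedding constant `C(p,q,n)` of Theorem 2.4:
`C(p,q,n) = [q/(q-p) + 2^{nq/p} + 2^{nq} Γ(q+1) e^{a+q+1}]^{1/q}` with
`a = 1/(2^{n/p′} e)`, where `n/p′ = n(1 - 1/p)`. -/
def Cpqn (p q : ℝ) (n : ℕ) : ℝ :=
  (q / (q - p) + 2 ^ ((n : ℝ) * q / p) +
      2 ^ ((n : ℝ) * q) * Real.Gamma (q + 1) *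
        Real.exp (1 / (2 ^ ((n : ℝ) * (1 - 1 / p)) * Real.exp 1) + q + 1)) ^ (1 / q)

set_option maxHeartbeats 2000000 in
/-- The embedding constant `C(p,q,n)` satisfies `C(p,q,n) = O(q)` as
`q → ∞`: there are `Cₙ > 0` depending only on `n` and a threshold `q₀ > p` with
`C(p,q,n) ≤ Cₙ · q` for all `q ≥ q₀`. -/
theorem Cpqn_linear_growth (n : ℕ) :
    ∃ Cn : ℝ, 0 < Cn ∧ ∀ p : ℝ, 1 ≤ p →
      ∃ q₀ : ℝ, p < q₀ ∧ ∀ q : ℝ, q₀ ≤ q → Cpqn p q n ≤ Cn * q := by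
  refine ⟨1000 * 2 ^ n, by positivity, fun p hp => ⟨2 * p + 3, by linarith, fun q hq => ?_⟩⟩
  unfold Cpqn
  have hp0 : (0:ℝ) < p := by linarith
  have hq3 : (3:ℝ) ≤ q := by linarith
  have hq0 : (0:ℝ) < q := by linarith
  have hqp : 0 < q - p := by linarith
  have hE0 : (0:ℝ) < Real.exp 1 := Real.exp_pos 1
  have hEd : Real.exp 1 < 2.7182818286 := Real.exp_one_lt_d9
  have hE1 : (1:ℝ) ≤ Real.exp 1 := by linarith [Real.add_one_le_exp (1:ℝ)]
  have hee1 : (1:ℝ) ≤ Real.exp 1 * Real.exp 1 := by nlinarith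
  have hee9 : Real.exp 1 * Real.exp 1 ≤ 9 := by nlinarith
  have h2n0 : (0:ℝ) < 2 ^ n := by positivity
  have h2n1 : (1:ℝ) ≤ 2 ^ n := one_le_pow₀ (by norm_num)
  set K : ℝ := 1000 * 2 ^ n * q with hK
  have hK0 : (0:ℝ) < K := by positivity
  set B : ℝ := 2 ^ n * (2 * q) * (Real.exp 1 * Real.exp 1) with hB
  have hB0 : (0:ℝ) < B := by positivity
  have hBqpos : (0:ℝ) < B ^ q := Real.rpow_pos_of_pos hB0 q
  -- rewrite 2^(nq) as (2^n)^q
  have h2nq : (2:ℝ) ^ ((n:ℝ) * q) = ((2:ℝ) ^ n) ^ q := by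
    rw [Real.rpow_mul (by norm_num), Real.rpow_natCast]
  -- Term 1
  have hT1 : q / (q - p) ≤ 2 := by rw [div_le_iff₀ hqp]; linarith
  -- Term 2
  have hT2 : (2:ℝ) ^ ((n:ℝ) * q / p) ≤ ((2:ℝ) ^ n) ^ q := by
    rw [← h2nq]
    exact Real.rpow_le_rpow_of_exponent_le (by norm_num)
      (div_le_self (by positivity) hp)
  -- Gamma bound
  have hGamma : Real.Gamma (q+1) ≤ (q+1) ^ (q+1) := by
    set m := ⌈q⌉₊ with hm
    have hqm : q ≤ (m:ℝ) := Nat.le_ceil q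
    have hm1 : (m:ℝ) ≤ q + 1 := le_of_lt (Nat.ceil_lt_add_one hq0.le)
    have h1 : Real.Gamma (q+1) ≤ Real.Gamma ((m:ℝ)+1) :=
      Real.Gamma_strictMonoOn_Ici.monotoneOn (Set.mem_Ici.mpr (by linarith))
        (Set.mem_Ici.mpr (by linarith)) (by linarith)
    have h2 : Real.Gamma ((m:ℝ)+1) = (m.factorial : ℝ) := Real.Gamma_nat_eq_factorial m
    have h3 : (m.factorial : ℝ) ≤ (m:ℝ) ^ (m:ℕ) := by
      exact_mod_cast Nat.cast_le.mpr (Nat.factorial_le_pow m)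
    calc Real.Gamma (q+1) ≤ (m.factorial : ℝ) := h2 ▸ h1
      _ ≤ (m:ℝ) ^ (m:ℕ) := h3
      _ = (m:ℝ) ^ ((m:ℕ):ℝ) := (Real.rpow_natCast _ _).symm
      _ ≤ (q+1) ^ ((m:ℕ):ℝ) := Real.rpow_le_rpow (by positivity) hm1 (by positivity)
      _ ≤ (q+1) ^ (q+1) := Real.rpow_le_rpow_of_exponent_le (by linarith) hm1
  -- exponential bound
  have hd1 : (1:ℝ) ≤ (2:ℝ) ^ ((n:ℝ) * (1 - 1/p)) := by
    have hex : (0:ℝ) ≤ (n:ℝ) * (1 - 1/p) := by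
      apply mul_nonneg (Nat.cast_nonneg n)
      have : 1/p ≤ 1 := by rw [div_le_one hp0]; exact hp
      linarith
    calc (1:ℝ) = (2:ℝ) ^ (0:ℝ) := (Real.rpow_zero 2).symm
      _ ≤ (2:ℝ) ^ ((n:ℝ) * (1 - 1/p)) :=
        Real.rpow_le_rpow_of_exponent_le (by norm_num) hex
  have ha1 : 1 / ((2:ℝ) ^ ((n:ℝ) * (1 - 1/p)) * Real.exp 1) ≤ 1 := by
    rw [div_le_one (by positivity)]
    nlinarith
  have hexp : Real.exp (1 / ((2:ℝ) ^ ((n:ℝ) * (1 - 1/p)) * Real.exp 1) + q + 1)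
      ≤ Real.exp 2 * Real.exp 1 ^ q := by
    rw [Real.exp_one_rpow, ← Real.exp_add]
    exact Real.exp_le_exp.mpr (by linarith)
  -- (q+1)^(q+1) ≤ (2q)^q * e^q
  have hq1e : q + 1 ≤ Real.exp 1 ^ q := by
    rw [Real.exp_one_rpow]; linarith [Real.add_one_le_exp q]
  have hpow : (q+1) ^ (q+1) ≤ (2*q) ^ q * Real.exp 1 ^ q := by
    have e1 : (q+1) ^ (q+1) = (q+1) ^ q * (q+1) := by
      rw [Real.rpow_add (show (0:ℝ) < q+1 by linarith) q 1, Real.rpow_one]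
    rw [e1]
    have h1 : (q+1) ^ q ≤ (2*q) ^ q :=
      Real.rpow_le_rpow (by linarith) (by linarith) hq0.le
    have h2 : (0:ℝ) ≤ (q+1) ^ q := Real.rpow_nonneg (by linarith) q
    have h3 : (0:ℝ) ≤ (2*q) ^ q := Real.rpow_nonneg (by linarith) q
    exact mul_le_mul h1 hq1e (by linarith) h3
  -- B^q expansion
  have hBq : B ^ q = ((2:ℝ)^n) ^ q * (2*q) ^ q * (Real.exp 1 ^ q * Real.exp 1 ^ q) := by
    rw [hB, Real.mul_rpow (by positivity) (by positivity),
        Real.mul_rpow (by positivity) (by positivity),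
        Real.mul_rpow hE0.le hE0.le]
  -- term 3 bound
  have hT3 : (2:ℝ) ^ ((n:ℝ) * q) * Real.Gamma (q + 1) *
        Real.exp (1 / ((2:ℝ) ^ ((n:ℝ) * (1 - 1/p)) * Real.exp 1) + q + 1)
      ≤ Real.exp 2 * B ^ q := by
    rw [h2nq, hBq]
    have hG0 : (0:ℝ) ≤ Real.Gamma (q+1) := (Real.Gamma_pos_of_pos (by linarith)).le
    have hx0 : (0:ℝ) ≤ ((2:ℝ)^n) ^ q := Real.rpow_nonneg h2n0.le q
    have hy0 : (0:ℝ) ≤ (2*q) ^ q := Real.rpow_nonneg (by linarith) q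
    have hz0 : (0:ℝ) ≤ Real.exp 1 ^ q := Real.rpow_nonneg hE0.le q
    have hg2 : Real.Gamma (q+1) ≤ (2*q) ^ q * Real.exp 1 ^ q := le_trans hGamma hpow
    have hexp0 : (0:ℝ) < Real.exp (1 / ((2:ℝ) ^ ((n:ℝ) * (1 - 1/p)) * Real.exp 1) + q + 1) :=
      Real.exp_pos _
    calc ((2:ℝ)^n) ^ q * Real.Gamma (q + 1) *
          Real.exp (1 / ((2:ℝ) ^ ((n:ℝ) * (1 - 1/p)) * Real.exp 1) + q + 1)
        ≤ ((2:ℝ)^n) ^ q * ((2*q) ^ q * Real.exp 1 ^ q) * (Real.exp 2 * Real.exp 1 ^ q) := by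
          apply mul_le_mul (mul_le_mul le_rfl hg2 hG0 hx0) hexp (le_of_lt hexp0)
          positivity
      _ = Real.exp 2 * (((2:ℝ)^n) ^ q * (2*q) ^ q * (Real.exp 1 ^ q * Real.exp 1 ^ q)) := by ring
  -- exp 2 ≤ 9
  have hexp2 : Real.exp 2 ≤ 9 := by
    have h : Real.exp 2 = Real.exp 1 * Real.exp 1 := by rw [← Real.exp_add]; norm_num
    linarith [h ▸ hee9]
  -- 2 ≤ B, 2^n ≤ B
  have hq2B : 2 * q ≤ B := by
    calc 2 * q ≤ 2 ^ n * (2 * q) := le_mul_of_one_le_left (by linarith) h2n1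
      _ ≤ B := le_mul_of_one_le_right (by positivity) hee1
  have hBge : (2:ℝ) ≤ B := by linarith
  have hB2n : (2:ℝ)^n ≤ B := by
    calc (2:ℝ)^n ≤ 2 ^ n * (2 * q) := le_mul_of_one_le_right h2n0.le (by linarith)
      _ ≤ B := le_mul_of_one_le_right (by positivity) hee1
  have hBq1 : B ≤ B ^ q := by
    calc B = B ^ (1:ℝ) := (Real.rpow_one B).symm
      _ ≤ B ^ q := Real.rpow_le_rpow_of_exponent_le (by linarith) (by linarith)
  have hBq2 : (2:ℝ) ≤ B ^ q := le_trans hBge hBq1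
  have h2nBq : ((2:ℝ)^n) ^ q ≤ B ^ q := Real.rpow_le_rpow h2n0.le hB2n hq0.le
  -- combine
  set A : ℝ := q / (q - p) + 2 ^ ((n : ℝ) * q / p) +
      2 ^ ((n : ℝ) * q) * Real.Gamma (q + 1) *
        Real.exp (1 / (2 ^ ((n : ℝ) * (1 - 1 / p)) * Real.exp 1) + q + 1) with hA
  have hT3' : (2:ℝ) ^ ((n:ℝ) * q) * Real.Gamma (q + 1) *
        Real.exp (1 / ((2:ℝ) ^ ((n:ℝ) * (1 - 1/p)) * Real.exp 1) + q + 1) ≤ 9 * B ^ q :=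
    le_trans hT3 (mul_le_mul_of_nonneg_right hexp2 hBqpos.le)
  have hA12 : A ≤ 12 * B ^ q := by
    rw [hA]
    have := hT2.trans h2nBq
    linarith
  have h12q : (12:ℝ) ≤ 12 ^ q := by
    calc (12:ℝ) = 12 ^ (1:ℝ) := (Real.rpow_one 12).symm
      _ ≤ 12 ^ q := Real.rpow_le_rpow_of_exponent_le (by norm_num) (by linarith)
  have hAK : A ≤ K ^ q := by
    have h1 : 12 * B ^ q ≤ 12 ^ q * B ^ q := mul_le_mul_of_nonneg_right h12q hBqpos.le
    have h2 : (12:ℝ) ^ q * B ^ q = (12 * B) ^ q :=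
      (Real.mul_rpow (by norm_num) hB0.le).symm
    have h3 : (12:ℝ) * B ≤ K := by
      have e : 12 * B = 2 ^ n * q * (24 * (Real.exp 1 * Real.exp 1)) := by rw [hB]; ring
      have h9 : 24 * (Real.exp 1 * Real.exp 1) ≤ 1000 := by nlinarith
      calc 12 * B = 2 ^ n * q * (24 * (Real.exp 1 * Real.exp 1)) := e
        _ ≤ 2 ^ n * q * 1000 := mul_le_mul_of_nonneg_left h9 (by positivity)
        _ = K := by rw [hK]; ring
    calc A ≤ (12 * B) ^ q := by rw [← h2]; linarith
      _ ≤ K ^ q := Real.rpow_le_rpow (by positivity) h3 hq0.le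
  have hA0 : (0:ℝ) ≤ A := by
    rw [hA]
    have hG0 : (0:ℝ) < Real.Gamma (q+1) := Real.Gamma_pos_of_pos (by linarith)
    have e1 := Real.rpow_pos_of_pos (show (0:ℝ) < 2 by norm_num) ((n:ℝ)*q/p)
    have e2 := Real.rpow_pos_of_pos (show (0:ℝ) < 2 by norm_num) ((n:ℝ)*q)
    have e3 := Real.exp_pos (1 / ((2:ℝ) ^ ((n:ℝ) * (1 - 1/p)) * Real.exp 1) + q + 1)
    have e4 : 0 ≤ q / (q - p) := by positivity
    nlinarith [mul_pos (mul_pos e2 hG0) e3]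
  calc A ^ (1/q) ≤ (K ^ q) ^ (1/q) :=
      Real.rpow_le_rpow hA0 hAK (by positivity)
    _ = K ^ (q * (1/q)) := (Real.rpow_mul hK0.le q (1/q)).symm
    _ = K := by rw [mul_one_div_cancel hq0.ne', Real.rpow_one]

end
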